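/- Let Δ be a simplicial complex on vertex set X, F a maximal face of Δ, and Δ' = Δ ∪ co_{x_0}F the complex on X ∪ {x_0}. Then the maximal faces of Δ' are exactly the maximal faces G ≠ F of Δ together with F ∪ {x_0}; correspondingly, the minimal primes of I_{Δ'} in K[X ∪ {x_0}] are the ideals P_G + (x_0) for maximal faces G ≠ F of Δ, and P_F. -/

import Mathlib

open MvPolynomial

/-- The Stanley–Reisner ideal of a simplicial complex `Δ` on the vertex set `V`. -/
noncomputable def stanleyReisnerIdeal (K : Type*) [Field K] {V : Type*}
    (Δ : Set (Finset V)) : Ideal (MvPolynomial V K) :=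
  Ideal.span ((fun S : Finset V => ∏ v ∈ S, X v) '' {S | S ∉ Δ})

/-- For a face `S`, the prime ideal `P_S` generated by the variables not in `S`. -/
noncomputable def facePrime (K : Type*) [Field K] {V : Type*}
    (S : Finset V) : Ideal (MvPolynomial V K) :=
  Ideal.span ((X : V → MvPolynomial V K) '' {v | v ∉ S})

section StanleyReisnerAux

variable {K : Type*} [Field K] {V : Type*} [DecidableEq V]

lemma facePrime_le_ker (S : Finset V) :
    facePrime K S ≤ RingHom.ker (eval (fun v => if v ∈ S then (1:K) else 0)) := by
  rw [facePrime, Ideal.span_le]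
  rintro _ ⟨v, hv, rfl⟩
  simp [RingHom.mem_ker, Set.mem_setOf_eq.mp hv]

lemma X_mem_facePrime {S : Finset V} {v : V} :
    (X v : MvPolynomial V K) ∈ facePrime K S ↔ v ∉ S := by
  constructor
  · intro h hv
    have := facePrime_le_ker S h
    simp [RingHom.mem_ker, hv] at this
  · intro hv
    exact Ideal.subset_span ⟨v, hv, rfl⟩

lemma prod_mem_facePrime {S T : Finset V} :
    (∏ v ∈ T, X v : MvPolynomial V K) ∈ facePrime K S ↔ ¬ T ⊆ S := by
  constructor
  · intro h hTS
    have := facePrime_le_ker S h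
    rw [RingHom.mem_ker, map_prod] at this
    have h1 : ∀ v ∈ T, (eval fun v => if v ∈ S then (1:K) else 0) (X v) = 1 := by
      intro v hv; simp [hTS hv]
    rw [Finset.prod_congr rfl h1, Finset.prod_const_one] at this
    exact one_ne_zero this
  · intro h
    obtain ⟨v, hvT, hvS⟩ := Finset.not_subset.mp h
    obtain ⟨c, hc⟩ := Finset.dvd_prod_of_mem (X : V → MvPolynomial V K) hvT
    rw [hc]
    exact Ideal.mul_mem_right _ _ (X_mem_facePrime.mpr hvS)

lemma facePrime_isPrime (S : Finset V) : (facePrime K S).IsPrime := by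
  classical
  set π : MvPolynomial V K →ₐ[K] MvPolynomial {v // v ∈ S} K :=
    aeval (fun v => if h : v ∈ S then X ⟨v, h⟩ else 0) with hπ
  set j : MvPolynomial {v // v ∈ S} K →ₐ[K] MvPolynomial V K :=
    aeval (fun w => X w.val) with hj
  have key : ∀ f : MvPolynomial V K, f - j (π f) ∈ facePrime K S := by
    intro f
    induction f using MvPolynomial.induction_on with
    | C a => simp [hπ, hj]
    | add f g hf hg =>
        have : f + g - j (π (f + g)) = (f - j (π f)) + (g - j (π g)) := by
          simp only [map_add]; ring
        rw [this]; exact Ideal.add_mem _ hf hg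
    | mul_X f v hf =>
        have : f * X v - j (π (f * X v)) =
            (f - j (π f)) * X v + j (π f) * (X v - j (π (X v))) := by
          simp only [map_mul]; ring
        rw [this]
        refine Ideal.add_mem _ (Ideal.mul_mem_right _ _ hf) (Ideal.mul_mem_left _ _ ?_)
        by_cases hv : v ∈ S
        · simp [hπ, hj, hv]
        · simpa [hπ, hj, hv] using X_mem_facePrime.mpr hv
  have heq : facePrime K S = RingHom.ker π := by
    apply le_antisymm
    · rw [facePrime, Ideal.span_le]
      rintro _ ⟨v, hv, rfl⟩
      simp [RingHom.mem_ker, hπ, Set.mem_setOf_eq.mp hv]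
    · intro f hf
      rw [RingHom.mem_ker] at hf
      have := key f
      rwa [hf, map_zero, sub_zero] at this
  rw [heq]
  exact RingHom.ker_isPrime π

lemma SR_le_facePrime_iff {Γ : Set (Finset V)}
    (hdown : ∀ S ∈ Γ, ∀ S' : Finset V, S' ⊆ S → S' ∈ Γ) {S : Finset V} :
    stanleyReisnerIdeal K Γ ≤ facePrime K S ↔ S ∈ Γ := by
  constructor
  · intro h
    by_contra hS
    have : (∏ v ∈ S, X v : MvPolynomial V K) ∈ facePrime K S :=
      h (Ideal.subset_span ⟨S, hS, rfl⟩)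
    exact (prod_mem_facePrime.mp this) subset_rfl
  · intro hS
    rw [stanleyReisnerIdeal, Ideal.span_le]
    rintro _ ⟨T, hT, rfl⟩
    exact prod_mem_facePrime.mpr (fun hTS => hT (hdown S hS T hTS))

lemma exists_maximal_face [Fintype V] {Γ : Set (Finset V)} {S : Finset V} (hS : S ∈ Γ) :
    ∃ G, (G ∈ Γ ∧ ∀ H ∈ Γ, G ⊆ H → H = G) ∧ S ⊆ G := by
  obtain ⟨G, hG, hmax⟩ := Set.Finite.exists_maximalFor id {G ∈ Γ | S ⊆ G}
    (Set.toFinite _) ⟨S, hS, subset_rfl⟩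
  refine ⟨G, ⟨hG.1, fun H hH hGH => ?_⟩, hG.2⟩
  exact subset_antisymm (hmax ⟨hH, hG.2.trans hGH⟩ hGH) hGH

lemma facePrime_le_of_prime [Fintype V] {Γ : Set (Finset V)} {p : Ideal (MvPolynomial V K)}
    (hp : p.IsPrime) (hIp : stanleyReisnerIdeal K Γ ≤ p) :
    ∃ G, (G ∈ Γ ∧ ∀ H ∈ Γ, G ⊆ H → H = G) ∧ facePrime K G ≤ p := by
  classical
  set S : Finset V := Finset.univ.filter (fun v => (X v : MvPolynomial V K) ∉ p) with hSdef
  have hS : S ∈ Γ := by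
    by_contra hS
    have : (∏ v ∈ S, X v : MvPolynomial V K) ∈ p := hIp (Ideal.subset_span ⟨S, hS, rfl⟩)
    obtain ⟨v, hvS, hvp⟩ := (Ideal.IsPrime.prod_mem_iff (hp := hp)).mp this
    exact (Finset.mem_filter.mp hvS).2 hvp
  obtain ⟨G, hGmax, hSG⟩ := exists_maximal_face hS
  refine ⟨G, hGmax, ?_⟩
  rw [facePrime, Ideal.span_le]
  rintro _ ⟨v, hv, rfl⟩
  have hvS : v ∉ S := fun hvS => (Set.mem_setOf_eq.mp hv) (hSG hvS)
  by_contra hxp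
  exact hvS (by rw [hSdef]; exact Finset.mem_filter.mpr ⟨Finset.mem_univ v, hxp⟩)

lemma minimalPrimes_SR [Fintype V] {Γ : Set (Finset V)}
    (hdown : ∀ S ∈ Γ, ∀ S' : Finset V, S' ⊆ S → S' ∈ Γ) :
    (stanleyReisnerIdeal K Γ).minimalPrimes =
      facePrime K '' {G | G ∈ Γ ∧ ∀ H ∈ Γ, G ⊆ H → H = G} := by
  ext p
  constructor
  · rintro ⟨⟨hp, hIp⟩, hmin⟩
    obtain ⟨G, hGmax, hGp⟩ := facePrime_le_of_prime hp hIp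
    refine ⟨G, hGmax, ?_⟩
    have hle : p ≤ facePrime K G :=
      hmin ⟨facePrime_isPrime G, (SR_le_facePrime_iff hdown).mpr hGmax.1⟩ hGp
    exact le_antisymm hGp hle
  · rintro ⟨G, hGmax, rfl⟩
    refine ⟨⟨facePrime_isPrime G, (SR_le_facePrime_iff hdown).mpr hGmax.1⟩, ?_⟩
    rintro q ⟨hq, hIq⟩ hqle
    obtain ⟨G', hG'max, hG'q⟩ := facePrime_le_of_prime hq hIq
    have hGG' : G ⊆ G' := by
      intro v hvG
      by_contra hvG'
      have : (X v : MvPolynomial (V) K) ∈ facePrime K G :=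
        hqle (hG'q (Ideal.subset_span ⟨v, hvG', rfl⟩))
      exact X_mem_facePrime.mp this hvG
    have : G' = G := hGmax.2 G' hG'max.1 hGG'
    rw [this] at hG'q
    exact hG'q

end StanleyReisnerAux

/-- Let `Δ` be a simplicial complex on the vertex set `V`, `F` a maximal face, and `Δ'`
obtained by adding to `Δ` the cone over `F` from a new vertex `x₀` (modelled by
`none : Option V`).  Then the maximal faces of `Δ'` are the maximal faces `G ≠ F` of `Δ`
together with `F ∪ {x₀}`, and correspondingly the minimal primes of `I_{Δ'}` are the
ideals `P_G + (x₀)` for maximal faces `G ≠ F` of `Δ`, together with `P_{F ∪ {x₀}}`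
(the ideal generated by the variables outside `F ∪ {x₀}`). -/
theorem cone_maximal_faces_and_minimal_primes {K : Type*} [Field K]
    {V : Type*} [Fintype V] [DecidableEq V]
    (Δ : Set (Finset V))
    (hdown : ∀ S ∈ Δ, ∀ S' : Finset V, S' ⊆ S → S' ∈ Δ)
    (hvert : ∀ v : V, {v} ∈ Δ)
    (F : Finset V) (hF : F ∈ Δ) (hFmax : ∀ G ∈ Δ, F ⊆ G → G = F)
    (Δ' : Set (Finset (Option V)))
    (hΔ' : Δ' = {G | (∃ S ∈ Δ, G = S.image some) ∨ G ⊆ insert none (F.image some)}) :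
    {G | G ∈ Δ' ∧ ∀ H ∈ Δ', G ⊆ H → H = G} =
      ((fun S : Finset V => S.image some) ''
          {G | G ∈ Δ ∧ (∀ H ∈ Δ, G ⊆ H → H = G) ∧ G ≠ F}) ∪
        {insert none (F.image some)} ∧
    (stanleyReisnerIdeal K Δ').minimalPrimes =
      ((fun G : Finset V => facePrime K (G.image some) ⊔
            Ideal.span {(X none : MvPolynomial (Option V) K)}) ''
          {G | G ∈ Δ ∧ (∀ H ∈ Δ, G ⊆ H → H = G) ∧ G ≠ F}) ∪
        {facePrime K (insert none (F.image some))} := by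
  have hsomeinj : Function.Injective (some : V → Option V) := Option.some_injective V
  have hface1 : insert none (F.image some) ∈ Δ' := by
    rw [hΔ']; exact Or.inr subset_rfl
  have hmax1 : ∀ H ∈ Δ', insert none (F.image some) ⊆ H → H = insert none (F.image some) := by
    intro H hH hsub
    rw [hΔ'] at hH
    rcases hH with ⟨S, _, rfl⟩ | hH
    · exfalso
      have : (none : Option V) ∈ S.image some := hsub (Finset.mem_insert_self _ _)
      simp at this
    · exact subset_antisymm hH hsub
  have h1 : {G | G ∈ Δ' ∧ ∀ H ∈ Δ', G ⊆ H → H = G} =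
      ((fun S : Finset V => S.image some) ''
          {G | G ∈ Δ ∧ (∀ H ∈ Δ, G ⊆ H → H = G) ∧ G ≠ F}) ∪
        {insert none (F.image some)} := by
    ext M
    constructor
    · rintro ⟨hM, hMmax⟩
      rw [hΔ'] at hM
      rcases hM with ⟨S, hS, rfl⟩ | hM
      · by_cases hSF : S = F
        · subst hSF
          exfalso
          have := hMmax _ hface1 (Finset.subset_insert _ _)
          have hn : (none : Option V) ∈ S.image some :=
            this ▸ Finset.mem_insert_self none (S.image some)
          simp at hn
        · left
          refine ⟨S, ⟨hS, fun H hH hSH => ?_, hSF⟩, rfl⟩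
          have hH' : H.image some ∈ Δ' := by rw [hΔ']; exact Or.inl ⟨H, hH, rfl⟩
          have := hMmax _ hH' (Finset.image_subset_image hSH)
          exact Finset.image_injective hsomeinj this
      · right
        exact (hMmax _ hface1 hM).symm
    · rintro (⟨G, ⟨hG, hGmax, hGF⟩, rfl⟩ | hM)
      · have hGnF : ¬ G ⊆ F := by
          intro h
          exact hGF (hGmax F hF h).symm
        constructor
        · rw [hΔ']; exact Or.inl ⟨G, hG, rfl⟩
        · intro H hH hsub
          rw [hΔ'] at hH
          rcases hH with ⟨S, hS, rfl⟩ | hH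
          · have : G ⊆ S := by
              intro v hv
              have := hsub (Finset.mem_image_of_mem some hv)
              simpa [hsomeinj.eq_iff] using this
            rw [hGmax S hS this]
          · exfalso
            obtain ⟨v, hvG, hvF⟩ := Finset.not_subset.mp hGnF
            have : some v ∈ insert none (F.image some) :=
              hH (hsub (Finset.mem_image_of_mem some hvG))
            simp at this
            exact hvF this
      · rw [Set.mem_singleton_iff] at hM
        subst hM
        exact ⟨hface1, hmax1⟩
  refine ⟨h1, ?_⟩
  have hdown' : ∀ S ∈ Δ', ∀ S' : Finset (Option V), S' ⊆ S → S' ∈ Δ' := by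
    intro S hS S' hsub
    rw [hΔ'] at hS ⊢
    rcases hS with ⟨T, hT, rfl⟩ | hS
    · obtain ⟨T', hT'T, hT'⟩ := Finset.subset_image_iff.mp hsub
      exact Or.inl ⟨T', hdown T hT T' hT'T, hT'.symm⟩
    · exact Or.inr (hsub.trans hS)
  rw [minimalPrimes_SR hdown', h1, Set.image_union, Set.image_singleton,
    Set.image_image]
  congr 1
  apply Set.image_congr
  intro G _
  have : Ideal.span {(X none : MvPolynomial (Option V) K)} ≤ facePrime K (G.image some) := by
    rw [Ideal.span_le, Set.singleton_subset_iff]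
    exact X_mem_facePrime.mpr (by simp)
  exact (sup_eq_left.mpr this).symm
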